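/- Define, for (x,y) in D = {(x,y) : 0 ≤ x ≤ y ≤ 1, x+y ≥ 1}, δ(x,y) = 2y(x+y)/(4y+x-1) and θ(x,y) = 3(x+y)(1-x)/(2y) if x ≤ 1/3; θ(x,y) = 2(x+y)/(y(1+3x)) if x ≥ 1/3 and y ≥ 2/3; θ(x,y) = (x+y)(4(1-x)(1-y)-xy)/(2(x(1-x)+y(1-y)-xy)) if y < 2/3. Then 1/δ(x,y) + 1/θ(x,y) ≥ 2 for all (x,y) ∈ D. -/

import Mathlib

/-!
Clearing denominators turns `1/δ + 1/θ ≥ 2` on each of the three pieces of `θ` into the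
nonnegativity of a polynomial, which in each case is written as a sum of products of factors
that are visibly nonnegative on the region. For `x ≥ 1/3, y ≥ 2/3` the polynomial is
`(1 - x)(1 - y)(3y - 1)`. For `y < 2/3` it is decreasing in `x` on the region, and on the
diagonal `x = y` it factors as `(1 - y)(2 - 3y)(9y - 8y² - 2)`.
-/

noncomputable def quadPackDensity (x y : ℝ) : ℝ := 2*y*(x+y)/(4*y+x-1)

noncomputable def quadCoverDensity (x y : ℝ) : ℝ :=
  if x ≤ 1/3 then 3*(x+y)*(1-x)/(2*y)
  else if 2/3 ≤ y then 2*(x+y)/(y*(1+3*x))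
  else (x+y)*(4*(1-x)*(1-y)-x*y)/(2*(x*(1-x)+y*(1-y)-x*y))

lemma two_le_div_add_div {a b c d : ℝ} (hb : 0 < b) (hd : 0 < d)
    (h : 2 * (b * d) ≤ a * d + b * c) : 2 ≤ a / b + c / d := by
  rwa [div_add_div _ _ hb.ne' hd.ne', le_div_iff₀ (mul_pos hb hd)]

section Pieces

variable {x y : ℝ}

lemma two_le_inv_quadPackDensity_add_inv_coverPiece₁ (hxy : x ≤ y) (hy1 : y ≤ 1)
    (hsum : 1 ≤ x + y) (hx : x ≤ 1/3) :
    2 ≤ (quadPackDensity x y)⁻¹ + 2*y/(3*(x+y)*(1-x)) := by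
  have hy : 0 < y := by linarith
  have hs : 0 < x + y := by linarith
  have hx1 : 0 < 1 - x := by linarith
  have key : 0 ≤ (3*x-1)^2 + 4*(1-y)*((y-x) + (x+y-1)*(1-3*x)) :=
    add_nonneg (sq_nonneg _) (mul_nonneg (by linarith)
      (add_nonneg (by linarith) (mul_nonneg (by linarith) (by linarith))))
  rw [quadPackDensity, inv_div]
  apply two_le_div_add_div (by positivity) (by positivity)
  linarith [mul_nonneg hs.le key]

lemma two_le_inv_quadPackDensity_add_inv_coverPiece₂ (hxy : x ≤ y) (hy1 : y ≤ 1)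
    (hsum : 1 ≤ x + y) :
    2 ≤ (quadPackDensity x y)⁻¹ + y*(1+3*x)/(2*(x+y)) := by
  have hy : 0 < y := by linarith
  have hs : 0 < x + y := by linarith
  have key : 0 ≤ (1-x)*(1-y)*(3*y-1) :=
    mul_nonneg (mul_nonneg (by linarith) (by linarith)) (by linarith)
  rw [quadPackDensity, inv_div]
  apply two_le_div_add_div (by positivity) (by positivity)
  linarith [mul_nonneg hs.le key]

lemma two_le_inv_quadPackDensity_add_inv_coverPiece₃ (hxy : x ≤ y) (hsum : 1 ≤ x + y)
    (hy : y < 2/3) :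
    2 ≤ (quadPackDensity x y)⁻¹ +
      2*(x*(1-x)+y*(1-y)-x*y)/((x+y)*(4*(1-x)*(1-y)-x*y)) := by
  have hy0 : 0 < y := by linarith
  have hs : 0 < x + y := by linarith
  have hN : 0 < 4*(1-x)*(1-y)-x*y := by
    have : 4*(1-x)*(1-y)-x*y = (2-y)*(2-3*y) + (y-x)*(4-3*y) := by ring
    rw [this]
    exact add_pos_of_pos_of_nonneg (mul_pos (by linarith) (by linarith))
      (mul_nonneg (by linarith) (by linarith))
  have hdiag : 0 ≤ 8*(y-1/2)*(2/3-y) + (2-y)/3 := by nlinarith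
  have hslope : 0 ≤ 36*(y-1/2)^3 + 16*(2/3-y)*(y-1/3) + 1/18 +
      (y-x)*(12*(y-1/2)*(2/3-y) + y) := by
    have hcurv : 0 ≤ 12*(y-1/2)*(2/3-y) + y := by nlinarith
    have hcube : 0 ≤ (y-1/2)^3 := pow_nonneg (by linarith) 3
    nlinarith [mul_nonneg (sub_nonneg.2 hxy) hcurv]
  have key : 0 ≤ (4*y+x-1-4*y*(x+y))*(4*(1-x)*(1-y)-x*y) + 4*y*(x*(1-x)+y*(1-y)-x*y) := by
    have : (4*y+x-1-4*y*(x+y))*(4*(1-x)*(1-y)-x*y) + 4*y*(x*(1-x)+y*(1-y)-x*y)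
        = (1-y)*(2-3*y)*(8*(y-1/2)*(2/3-y) + (2-y)/3) +
          (y-x)*(36*(y-1/2)^3 + 16*(2/3-y)*(y-1/3) + 1/18 +
            (y-x)*(12*(y-1/2)*(2/3-y) + y)) := by ring
    rw [this]
    exact add_nonneg (mul_nonneg (mul_nonneg (by linarith) (by linarith)) hdiag)
      (mul_nonneg (by linarith) hslope)
  rw [quadPackDensity, inv_div]
  apply two_le_div_add_div (by positivity) (mul_pos hs hN)
  linarith [mul_nonneg hs.le key]

end Pieces

theorem stmt_19_general (x y : ℝ) (hxy : x ≤ y) (hy1 : y ≤ 1) (hsum : 1 ≤ x + y) :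
    1 / quadPackDensity x y + 1 / quadCoverDensity x y ≥ 2 := by
  rw [one_div, one_div, quadCoverDensity]
  split_ifs with hx hy
  · rw [inv_div]
    exact two_le_inv_quadPackDensity_add_inv_coverPiece₁ hxy hy1 hsum hx
  · rw [inv_div]
    exact two_le_inv_quadPackDensity_add_inv_coverPiece₂ hxy hy1 hsum
  · rw [inv_div]
    exact two_le_inv_quadPackDensity_add_inv_coverPiece₃ hxy hsum (not_le.1 hy)

theorem stmt_19 (x y : ℝ) (hx0 : 0 ≤ x) (hxy : x ≤ y) (hy1 : y ≤ 1) (hsum : 1 ≤ x + y) :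
    1 / quadPackDensity x y + 1 / quadCoverDensity x y ≥ 2 :=
  stmt_19_general x y hxy hy1 hsum
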